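/- The closed unit ball of (c₀, |||·|||) is weak*-dense in U = {x ∈ ℓ∞ : |||x||| ≤ 1}; more precisely, for every x ∈ U there is a sequence (x_m) in c₀ with |||x_m||| = |||x||| ≤ 1 converging to x coordinate-wise. -/

import Mathlib

open Filter Topology

/-- The sup norm of a real sequence. -/
noncomputable def supNorm (x : ℕ → ℝ) : ℝ := ⨆ k, |x k|

/-- The duality pairing `⟨x, v⟩ = ∑ₖ x k * v k`. -/
noncomputable def pairing (x v : ℕ → ℝ) : ℝ := ∑' k, x k * v k

/-- Read's norm `|||x||| = ‖x‖_∞ + ∑ₙ rₙ |⟨x, vₙ⟩|`. -/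
noncomputable def readNorm (r : ℕ → ℝ) (v : ℕ → ℕ → ℝ) (x : ℕ → ℝ) : ℝ :=
  supNorm x + ∑' n, r n * |pairing x (v n)|

/-! The truncations `S_m x` converge to `x` coordinatewise, and `|||S_m x||| → |||x|||`: the sup norms
of the truncations increase to `‖x‖_∞`, and each pairing `⟨S_m x, v_n⟩` is a partial sum of
`⟨x, v_n⟩`, dominated by `‖x‖_∞ ‖v_n‖₁`, so the weighted series converges by dominated convergence
since `(r_n)` is summable. For `x ≠ 0` the rescaled truncations `(|||x||| / |||S_m x|||) S_m x`, taken
once `|||S_m x||| > 0`, have exactly the norm of `x` and still converge to `x` coordinatewise. -/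

def truncate (m : ℕ) (x : ℕ → ℝ) : ℕ → ℝ := fun k => if k < m then x k else 0

section Truncate

variable {m k : ℕ} {x : ℕ → ℝ}

lemma truncate_apply_of_lt (h : k < m) : truncate m x k = x k := if_pos h

lemma truncate_apply_of_le (h : m ≤ k) : truncate m x k = 0 := if_neg (Nat.not_lt.2 h)

lemma abs_truncate_apply_le : |truncate m x k| ≤ |x k| := by
  unfold truncate
  split_ifs <;> simp

lemma tendsto_truncate_atTop_zero (m : ℕ) (x : ℕ → ℝ) : Tendsto (truncate m x) atTop (𝓝 0) :=
  tendsto_const_nhds.congr' <| (eventually_ge_atTop m).mono fun _ hk =>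
    (truncate_apply_of_le hk).symm

lemma tendsto_truncate_apply (x : ℕ → ℝ) (k : ℕ) :
    Tendsto (fun m => truncate m x k) atTop (𝓝 (x k)) :=
  tendsto_const_nhds.congr' <| (eventually_gt_atTop k).mono fun _ hm =>
    (truncate_apply_of_lt hm).symm

end Truncate

section Bounded

variable {x : ℕ → ℝ} {C : ℝ}

lemma abs_le_supNorm (hx : ∀ k, |x k| ≤ C) (k : ℕ) : |x k| ≤ supNorm x :=
  le_ciSup ⟨C, by rintro _ ⟨j, rfl⟩; exact hx j⟩ k

lemma supNorm_le (hx : ∀ k, |x k| ≤ C) : supNorm x ≤ C := ciSup_le hx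

lemma tendsto_supNorm_truncate (hx : ∀ k, |x k| ≤ C) :
    Tendsto (fun m => supNorm (truncate m x)) atTop (𝓝 (supNorm x)) := by
  refine tendsto_order.2 ⟨fun a ha => ?_, fun a ha => ?_⟩
  · obtain ⟨k, hk⟩ := exists_lt_of_lt_ciSup ha
    filter_upwards [eventually_gt_atTop k] with m hm
    calc a < |x k| := hk
      _ = |truncate m x k| := by rw [truncate_apply_of_lt hm]
      _ ≤ supNorm (truncate m x) :=
        abs_le_supNorm (fun j => abs_truncate_apply_le.trans (hx j)) k
  · exact Eventually.of_forall fun m =>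
      (supNorm_le fun k => abs_truncate_apply_le.trans (abs_le_supNorm hx k)).trans_lt ha

variable {v : ℕ → ℝ}

lemma summable_mul_of_abs_le (hv : Summable fun k => |v k|) (hx : ∀ k, |x k| ≤ C) :
    Summable fun k => x k * v k :=
  (hv.mul_left C).of_norm_bounded fun k => by
    rw [Real.norm_eq_abs, abs_mul]
    exact mul_le_mul_of_nonneg_right (hx k) (abs_nonneg _)

lemma abs_pairing_le (hv : Summable fun k => |v k|) (hx : ∀ k, |x k| ≤ C) :
    |pairing x v| ≤ C * ∑' k, |v k| := by
  have hbound : ∀ k, |x k * v k| ≤ C * |v k| := fun k => by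
    rw [abs_mul]
    exact mul_le_mul_of_nonneg_right (hx k) (abs_nonneg _)
  have habs : Summable fun k => |x k * v k| :=
    (hv.mul_left C).of_nonneg_of_le (fun _ => abs_nonneg _) hbound
  calc |pairing x v| ≤ ∑' k, |x k * v k| := by
        simpa only [pairing, Real.norm_eq_abs] using
          norm_tsum_le_tsum_norm (f := fun k => x k * v k) habs
    _ ≤ ∑' k, C * |v k| := habs.tsum_le_tsum hbound (hv.mul_left C)
    _ = C * ∑' k, |v k| := tsum_mul_left

lemma pairing_truncate (m : ℕ) (x v : ℕ → ℝ) :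
    pairing (truncate m x) v = ∑ k ∈ Finset.range m, x k * v k := by
  rw [pairing, tsum_eq_sum (s := Finset.range m) fun k hk => by
    rw [truncate_apply_of_le (by simpa using hk), zero_mul]]
  exact Finset.sum_congr rfl fun k hk => by
    rw [truncate_apply_of_lt (Finset.mem_range.1 hk)]

lemma tendsto_pairing_truncate (hv : Summable fun k => |v k|) (hx : ∀ k, |x k| ≤ C) :
    Tendsto (fun m => pairing (truncate m x) v) atTop (𝓝 (pairing x v)) := by
  rw [funext fun m => pairing_truncate m x v]
  exact (summable_mul_of_abs_le hv hx).hasSum.tendsto_sum_nat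

end Bounded

section ReadNorm

variable {r : ℕ → ℝ} {v : ℕ → ℕ → ℝ} {x : ℕ → ℝ} {C : ℝ}

lemma abs_le_readNorm (hr0 : ∀ n, 0 ≤ r n) (hx : ∀ k, |x k| ≤ C) (k : ℕ) :
    |x k| ≤ readNorm r v x :=
  (abs_le_supNorm hx k).trans <| le_add_of_nonneg_right <|
    tsum_nonneg fun n => mul_nonneg (hr0 n) (abs_nonneg _)

lemma readNorm_smul {c : ℝ} (hc : 0 ≤ c) : readNorm r v (c • x) = c * readNorm r v x := by
  have hsup : supNorm (c • x) = c * supNorm x := by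
    simp only [supNorm, Real.mul_iSup_of_nonneg hc, Pi.smul_apply, smul_eq_mul, abs_mul,
      abs_of_nonneg hc]
  have hpair : ∀ w, pairing (c • x) w = c * pairing x w := fun w => by
    simp only [pairing, Pi.smul_apply, smul_eq_mul, mul_assoc, tsum_mul_left]
  simp only [readNorm, hsup, hpair, abs_mul, abs_of_nonneg hc, mul_add, ← tsum_mul_left]
  congr 2 with n
  ring

lemma tendsto_readNorm_truncate (hr0 : ∀ n, 0 ≤ r n) (hrsum : Summable r)
    (hv1 : ∀ n, Summable fun k => |v n k|) (hv2 : ∀ n, ∑' k, |v n k| ≤ 1)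
    (hx : ∀ k, |x k| ≤ C) :
    Tendsto (fun m => readNorm r v (truncate m x)) atTop (𝓝 (readNorm r v x)) := by
  have hC : 0 ≤ C := (abs_nonneg _).trans (hx 0)
  have hseries : Tendsto (fun m => ∑' n, r n * |pairing (truncate m x) (v n)|) atTop
      (𝓝 (∑' n, r n * |pairing x (v n)|)) := by
    refine tendsto_tsum_of_dominated_convergence (hrsum.mul_right C)
      (fun n => ((tendsto_pairing_truncate (hv1 n) hx).abs).const_mul (r n))
      (Eventually.of_forall fun m n => ?_)
    have hpair : |pairing (truncate m x) (v n)| ≤ C :=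
      calc |pairing (truncate m x) (v n)| ≤ C * ∑' k, |v n k| :=
            abs_pairing_le (hv1 n) fun k => abs_truncate_apply_le.trans (hx k)
        _ ≤ C := mul_le_of_le_one_right hC (hv2 n)
    rw [Real.norm_eq_abs, abs_mul, abs_of_nonneg (hr0 n), abs_abs]
    exact mul_le_mul_of_nonneg_left hpair (hr0 n)
  exact (tendsto_supNorm_truncate hx).add hseries

end ReadNorm

theorem c0_ball_weak_star_dense_general
    (r : ℕ → ℝ) (hr0 : ∀ n, 0 ≤ r n) (hrsum : Summable r)
    (v : ℕ → ℕ → ℝ) (hv1 : ∀ n, Summable fun k => |v n k|)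
    (hv2 : ∀ n, ∑' k, |v n k| = 1)
    (x : ℕ → ℝ) (hxbdd : ∃ C, ∀ k, |x k| ≤ C) :
    ∃ y : ℕ → ℕ → ℝ,
      (∀ m, Tendsto (y m) atTop (𝓝 0)) ∧
      (∀ m, readNorm r v (y m) = readNorm r v x) ∧
      (∀ k, Tendsto (fun m => y m k) atTop (𝓝 (x k))) := by
  obtain ⟨C, hC⟩ := hxbdd
  by_cases hx0 : x = 0
  · subst hx0
    exact ⟨fun _ => 0, fun _ => tendsto_const_nhds, fun _ => rfl, fun _ => tendsto_const_nhds⟩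
  have hlim := tendsto_readNorm_truncate hr0 hrsum hv1 (fun n => (hv2 n).le) hC
  set R := readNorm r v x
  obtain ⟨k₀, hk₀⟩ := Function.ne_iff.1 hx0
  have hR : 0 < R := (abs_pos.2 hk₀).trans_le (abs_le_readNorm hr0 hC k₀)
  obtain ⟨N, hN⟩ := eventually_atTop.1 (hlim.eventually (lt_mem_nhds hR))
  set scale : ℕ → ℝ := fun m => R / readNorm r v (truncate (m + N) x)
  have hscale : Tendsto scale atTop (𝓝 1) := by
    rw [← div_self hR.ne']
    exact tendsto_const_nhds.div (hlim.comp (tendsto_add_atTop_nat N)) hR.ne'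
  refine ⟨fun m => scale m • truncate (m + N) x, fun m => ?_, fun m => ?_, fun k => ?_⟩
  · rw [← smul_zero (scale m)]
    exact (tendsto_truncate_atTop_zero (m + N) x).const_smul (scale m)
  · have hpos := hN (m + N) le_add_self
    rw [readNorm_smul (div_nonneg hR.le hpos.le)]
    exact div_mul_cancel₀ R hpos.ne'
  · simpa using hscale.mul ((tendsto_truncate_apply x k).comp (tendsto_add_atTop_nat N))

/-- The unit ball of `(c₀, |||·|||)` is weak*-dense in `U = {x ∈ ℓ∞ : |||x||| ≤ 1}`:
for every `x ∈ U` there is a sequence `(x_m)` in `c₀` with `|||x_m||| = |||x||| ≤ 1`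
converging to `x` coordinate-wise. -/
theorem c0_ball_weak_star_dense
    (r : ℕ → ℝ) (hr0 : ∀ n, 0 ≤ r n) (hrsum : Summable r)
    (v : ℕ → ℕ → ℝ) (hv1 : ∀ n, Summable fun k => |v n k|)
    (hv2 : ∀ n, ∑' k, |v n k| = 1)
    (x : ℕ → ℝ) (hxbdd : ∃ C, ∀ k, |x k| ≤ C)
    (hx : readNorm r v x ≤ 1) :
    ∃ y : ℕ → ℕ → ℝ,
      (∀ m, Tendsto (y m) atTop (𝓝 0)) ∧
      (∀ m, readNorm r v (y m) = readNorm r v x) ∧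
      (∀ k, Tendsto (fun m => y m k) atTop (𝓝 (x k))) :=
  c0_ball_weak_star_dense_general r hr0 hrsum v hv1 hv2 x hxbdd
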